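/- On ℝ_{>0} × ℝⁿ with coordinates x⁰, x¹, …, xⁿ, let ∇̂ be the symmetric affine connection whose only non-zero Christoffel symbols are Γ̂^i_{j0} = Γ̂^i_{0j} = δ^i_j / x⁰ for i, j = 1, …, n. Then: (i) the curvature tensor of ∇̂ vanishes identically; (ii) for any constants (a^{ij}, b^i, K) with a^{ij} = a^{ji} (i, j = 1, …, n), the symmetric contravariant 2-tensor A with components A^{ij} = (x⁰)^{−2}(a^{ij} + b^i x^j + b^j x^i − K x^i x^j), A^{0i} = A^{i0} = −(b^i − K x^i)/x⁰, A^{00} = −K is parallel with respect to ∇̂, i.e. ∂_γ A^{αβ} + Γ̂^α_{γs} A^{sβ} + Γ̂^β_{γs} A^{αs} = 0 for all α, β, γ ∈ {0, …, n}; (iii) in the coordinates y⁰ = x⁰, y^i = x⁰ x^i the Christoffel symbols of ∇̂ vanish and the components of A become the constants A^{ij} = a^{ij}, A^{0i} = A^{i0} = −b^i, A^{00} = −K. -/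

import Mathlib

open scoped BigOperators

/-- Partial derivative `∂_k f` at `x`. -/
noncomputable def pd {n : ℕ} (f : (Fin n → ℝ) → ℝ) (k : Fin n) (x : Fin n → ℝ) : ℝ :=
  fderiv ℝ f x (Pi.single k 1)

/-- Christoffel symbols `Γ^i_{jk}` of a metric `g`. -/
noncomputable def Christoffel {n : ℕ} (g : (Fin n → ℝ) → Matrix (Fin n) (Fin n) ℝ)
    (i j k : Fin n) (x : Fin n → ℝ) : ℝ :=
  (1 / 2) * ∑ s, (g x)⁻¹ i s *
    (pd (fun y => g y s k) j x + pd (fun y => g y s j) k x - pd (fun y => g y j k) s x)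

/-- Curvature tensor `R^l_{ijk}` of a metric `g`. -/
noncomputable def Curv {n : ℕ} (g : (Fin n → ℝ) → Matrix (Fin n) (Fin n) ℝ)
    (l i j k : Fin n) (x : Fin n → ℝ) : ℝ :=
  pd (Christoffel g l i k) j x - pd (Christoffel g l i j) k x
    + ∑ s, (Christoffel g l j s x * Christoffel g s i k x
        - Christoffel g l k s x * Christoffel g s i j x)

/-- `g` is a (smooth pseudo-Riemannian) metric on `U`. -/
def IsMetricOn {n : ℕ} (g : (Fin n → ℝ) → Matrix (Fin n) (Fin n) ℝ)
    (U : Set (Fin n → ℝ)) : Prop :=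
  (∀ i j, ContDiffOn ℝ (⊤ : ℕ∞) (fun x => g x i j) U) ∧
    (∀ x ∈ U, (g x).IsSymm) ∧ ∀ x ∈ U, (g x).det ≠ 0

/-- The metric `g` is flat on `U`. -/
def IsFlatOn {n : ℕ} (g : (Fin n → ℝ) → Matrix (Fin n) (Fin n) ℝ)
    (U : Set (Fin n → ℝ)) : Prop :=
  ∀ x ∈ U, ∀ l i j k : Fin n, Curv g l i j k x = 0

/-- The metric `g` has constant curvature `K` on `U`:
`g^{js} R^i_{skm} = K (δ^i_k δ^j_m − δ^i_m δ^j_k)`. -/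
def HasConstCurvOn {n : ℕ} (g : (Fin n → ℝ) → Matrix (Fin n) (Fin n) ℝ)
    (U : Set (Fin n → ℝ)) (K : ℝ) : Prop :=
  ∀ x ∈ U, ∀ i j k m : Fin n,
    (∑ s, (g x)⁻¹ j s * Curv g i s k m x)
      = K * ((if i = k then (1:ℝ) else 0) * (if j = m then (1:ℝ) else 0)
          - (if i = m then (1:ℝ) else 0) * (if j = k then (1:ℝ) else 0))

/-- `λ = ½ tr L`. -/
noncomputable def lamL {n : ℕ} (L : (Fin n → ℝ) → Matrix (Fin n) (Fin n) ℝ)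
    (x : Fin n → ℝ) : ℝ :=
  (1 / 2) * ∑ i, L x i i

/-- `L_{ij} = L^s_i g_{sj}`. -/
noncomputable def lowL {n : ℕ} (g L : (Fin n → ℝ) → Matrix (Fin n) (Fin n) ℝ)
    (x : Fin n → ℝ) (i j : Fin n) : ℝ :=
  ∑ s, L x s i * g x s j

/-- `∇_k L_{ij} = ∂_k L_{ij} − Γ^s_{ki} L_{sj} − Γ^s_{kj} L_{is}`. -/
noncomputable def covL {n : ℕ} (g L : (Fin n → ℝ) → Matrix (Fin n) (Fin n) ℝ)
    (k i j : Fin n) (x : Fin n → ℝ) : ℝ :=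
  pd (fun y => lowL g L y i j) k x
    - ∑ s, Christoffel g s k i x * lowL g L x s j
    - ∑ s, Christoffel g s k j x * lowL g L x i s

/-- `L` is geodesically compatible with `g` on `U`: it is smooth, `L_{ij}` is
symmetric, and `∇_k L_{ij} = λ_i g_{jk} + λ_j g_{ik}` with `λ = ½ tr L`. -/
def GeodCompatOn {n : ℕ} (g L : (Fin n → ℝ) → Matrix (Fin n) (Fin n) ℝ)
    (U : Set (Fin n → ℝ)) : Prop :=
  (∀ i j, ContDiffOn ℝ (⊤ : ℕ∞) (fun x => L x i j) U) ∧
    (∀ x ∈ U, ∀ i j, lowL g L x i j = lowL g L x j i) ∧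
    ∀ x ∈ U, ∀ k i j, covL g L k i j x
      = pd (lamL L) i x * g x j k + pd (lamL L) j x * g x i k

/-- `h` is a Casimir of the constant-curvature (curvature `K`) metric `g`:
`g^{is} (∂_s ∂_j h − Γ^r_{sj} ∂_r h) + K h δ^i_j = 0`. -/
def IsCasimirOn {n : ℕ} (g : (Fin n → ℝ) → Matrix (Fin n) (Fin n) ℝ) (K : ℝ)
    (U : Set (Fin n → ℝ)) (h : (Fin n → ℝ) → ℝ) : Prop :=
  ContDiffOn ℝ (⊤ : ℕ∞) h U ∧
    ∀ x ∈ U, ∀ i j : Fin n,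
      (∑ s, (g x)⁻¹ i s * (pd (pd h j) s x - ∑ r, Christoffel g r s j x * pd h r x))
        + K * h x * (if i = j then (1:ℝ) else 0) = 0

/-- The Christoffel symbols of the flat cone connection `∇̂` on `ℝ_{>0} × ℝⁿ`:
the only non-zero ones are `Γ̂^i_{j0} = Γ̂^i_{0j} = δ^i_j / x⁰`, `i,j = 1,…,n`. -/
noncomputable def hatGam (n : ℕ) (a b c : Fin (n + 1)) (x : Fin (n + 1) → ℝ) : ℝ :=
  if a ≠ 0 ∧ ((b = a ∧ c = 0) ∨ (b = 0 ∧ c = a)) then 1 / x 0 else 0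

/-- Curvature tensor of the connection `∇̂`. -/
noncomputable def hatCurv (n : ℕ) (l i j k : Fin (n + 1)) (x : Fin (n + 1) → ℝ) : ℝ :=
  pd (hatGam n l i k) j x - pd (hatGam n l i j) k x
    + ∑ s, (hatGam n l j s x * hatGam n s i k x - hatGam n l k s x * hatGam n s i j x)

/-- Components of the contravariant 2-tensor `A` on `ℝ_{>0} × ℝⁿ`. -/
noncomputable def Acomp (n : ℕ) (a : Matrix (Fin n) (Fin n) ℝ) (b : Fin n → ℝ) (K : ℝ)
    (al be : Fin (n + 1)) (x : Fin (n + 1) → ℝ) : ℝ :=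
  Fin.cases (motive := fun _ => ℝ)
    (Fin.cases (motive := fun _ => ℝ) (-K) (fun j => -(b j - K * x j.succ) / x 0) be)
    (fun i =>
      Fin.cases (motive := fun _ => ℝ) (-(b i - K * x i.succ) / x 0)
        (fun j =>
          (a i j + b i * x j.succ + b j * x i.succ - K * (x i.succ * x j.succ)) / (x 0) ^ 2)
        be)
    al

/-- The coordinate change `y⁰ = x⁰`, `y^i = x⁰ x^i`. -/
noncomputable def ycoord (n : ℕ) (al : Fin (n + 1)) (x : Fin (n + 1) → ℝ) : ℝ :=
  Fin.cases (motive := fun _ => ℝ) (x 0) (fun i => x 0 * x i.succ) al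

/-- The constant components of `A` in the `y`-coordinates. -/
noncomputable def Aconst (n : ℕ) (a : Matrix (Fin n) (Fin n) ℝ) (b : Fin n → ℝ) (K : ℝ)
    (al be : Fin (n + 1)) : ℝ :=
  Fin.cases (motive := fun _ => ℝ)
    (Fin.cases (motive := fun _ => ℝ) (-K) (fun j => -(b j)) be)
    (fun i => Fin.cases (motive := fun _ => ℝ) (-(b i)) (fun j => a i j) be)
    al


section Stmt11Aux

lemma zero_ne_succ' {m : ℕ} (j : Fin m) : ¬ (0 : Fin (m+1)) = j.succ :=
  fun h => Fin.succ_ne_zero j h.symm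

lemma single_app {m : ℕ} (k i : Fin m) :
    (Pi.single k (1:ℝ) : Fin m → ℝ) i = if k = i then 1 else 0 := by
  rw [Pi.single_apply]; split_ifs <;> simp_all

lemma pd_of_hasFDerivAt' {m : ℕ} {f : (Fin m → ℝ) → ℝ} {L : (Fin m → ℝ) →L[ℝ] ℝ}
    {x : Fin m → ℝ} (h : HasFDerivAt f L x) (k : Fin m) : pd f k x = L (Pi.single k 1) := by
  rw [pd, h.fderiv]

lemma hasF_coord {m : ℕ} (i : Fin m) (x : Fin m → ℝ) :
    HasFDerivAt (fun y : Fin m → ℝ => y i)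
      (ContinuousLinearMap.proj (R := ℝ) (φ := fun _ : Fin m => ℝ) i) x := by
  exact (ContinuousLinearMap.proj (R := ℝ) (φ := fun _ : Fin m => ℝ) i).hasFDerivAt

lemma hasF_inv0 {m : ℕ} (x : Fin (m+1) → ℝ) (h0 : x 0 ≠ 0) :
    HasFDerivAt (fun y : Fin (m+1) → ℝ => (y 0)⁻¹)
      ((ContinuousLinearMap.smulRight (1 : ℝ →L[ℝ] ℝ) (-(x 0 ^ 2)⁻¹)).comp
        (ContinuousLinearMap.proj (R := ℝ) (φ := fun _ : Fin (m+1) => ℝ) 0)) x :=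
  (hasFDerivAt_inv h0).comp x (hasF_coord 0 x)

lemma pd_coord {m : ℕ} (i k : Fin m) (x : Fin m → ℝ) :
    pd (fun y => y i) k x = if k = i then 1 else 0 := by
  rw [pd_of_hasFDerivAt' (hasF_coord i x)]
  simp [single_app]

lemma pd_const {m : ℕ} (c : ℝ) (k : Fin m) (x : Fin m → ℝ) :
    pd (fun _ => c) k x = 0 := by
  rw [pd_of_hasFDerivAt' (hasFDerivAt_const c x)]; simp

lemma pd_inv0 {m : ℕ} (k : Fin (m+1)) (x : Fin (m+1) → ℝ) (h0 : x 0 ≠ 0) :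
    pd (fun y => 1 / y 0) k x = if k = 0 then -(1 / x 0 ^ 2) else 0 := by
  simp only [one_div]
  rw [pd_of_hasFDerivAt' (hasF_inv0 x h0)]
  by_cases h : k = 0 <;> simp [h, single_app]

lemma hatGam_zero (n : ℕ) (b c : Fin (n+1)) (x : Fin (n+1) → ℝ) : hatGam n 0 b c x = 0 := by
  simp [hatGam]

lemma sum_right (n : ℕ) (al ga : Fin (n+1)) (x : Fin (n+1) → ℝ) (T : Fin (n+1) → ℝ) :
    (∑ s, hatGam n al ga s x * T s)
      = (if al ≠ 0 ∧ ga = al then T 0 / x 0 else 0)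
        + (if al ≠ 0 ∧ ga = 0 then T al / x 0 else 0) := by
  by_cases hal : al = 0
  · simp [hatGam, hal]
  · by_cases hga : ga = al
    · have hga0 : ¬ ga = 0 := by rw [hga]; exact hal
      rw [Finset.sum_eq_single 0 (fun s _ hs => by simp [hatGam, hs, hga0])
        (fun h => absurd (Finset.mem_univ _) h)]
      simp [hatGam, hal, hga, hga0]
      ring
    · by_cases hga0 : ga = 0
      · have h0al : ¬ (0:Fin (n+1)) = al := fun h => hal h.symm
        rw [Finset.sum_eq_single al (fun s _ hs => by simp [hatGam, hga0, h0al, hs])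
          (fun h => absurd (Finset.mem_univ _) h)]
        simp [hatGam, hal, hga, hga0, h0al]
        ring
      · simp [hatGam, hal, hga, hga0]

lemma sum_left (n : ℕ) (be ga : Fin (n+1)) (x : Fin (n+1) → ℝ) (T : Fin (n+1) → ℝ) :
    (∑ s, hatGam n s be ga x * T s)
      = (if be ≠ 0 ∧ ga = 0 then T be / x 0 else 0)
        + (if be = 0 ∧ ga ≠ 0 then T ga / x 0 else 0) := by
  by_cases hbe : be = 0 <;> by_cases hga : ga = 0
  · rw [Finset.sum_eq_zero fun s _ => by
      simp [hatGam, hbe, hga]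
      intro h1 h2; exact absurd h2.symm h1]
    simp [hbe, hga]
  · rw [Finset.sum_eq_single ga (fun s _ hs => by
      simp [hatGam, hbe, hga]
      intro _ h; exact absurd h.symm hs)
      (fun h => absurd (Finset.mem_univ _) h)]
    simp [hatGam, hbe, hga, fun h : ga = 0 => hga h]
    ring
  · rw [Finset.sum_eq_single be (fun s _ hs => by
      simp [hatGam, hga]
      intro _ h
      rcases h with h | h
      · exact absurd h.symm hs
      · exact absurd h.1 hbe)
      (fun h => absurd (Finset.mem_univ _) h)]
    simp [hatGam, hbe, hga]
    ring
  · rw [Finset.sum_eq_zero fun s _ => by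
      simp [hatGam, hbe, hga]]
    simp [hbe, hga]

lemma pd_hatGam (n : ℕ) (a b c k : Fin (n+1)) (x : Fin (n+1) → ℝ) (h0 : x 0 ≠ 0) :
    pd (hatGam n a b c) k x
      = if a ≠ 0 ∧ ((b = a ∧ c = 0) ∨ (b = 0 ∧ c = a)) then
          (if k = 0 then -(1 / x 0 ^ 2) else 0) else 0 := by
  by_cases h : a ≠ 0 ∧ ((b = a ∧ c = 0) ∨ (b = 0 ∧ c = a))
  · rw [if_pos h, show hatGam n a b c = fun y => 1 / y 0 from funext fun y => if_pos h]
    exact pd_inv0 k x h0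
  · rw [if_neg h, show hatGam n a b c = fun _ => (0:ℝ) from funext fun y => if_neg h]
    exact pd_const 0 k x

lemma cancel_aux (A L B : Prop) [Decidable A] [Decidable L] [Decidable B]
    (hAL : A → L) (t : ℝ) :
    (if A then (if B then -(1/t^2) else 0) else 0)
      + (if L ∧ B then (if A then 1/t else 0)/t else 0) = 0 := by
  by_cases hA : A
  · by_cases hB : B
    · simp [hA, hB, hAL hA]
      ring
    · simp [hB]
  · simp [hA]

lemma part1 (n : ℕ) (x : Fin (n + 1) → ℝ) (h0 : 0 < x 0) (l i j k : Fin (n + 1)) :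
    hatCurv n l i j k x = 0 := by
  have hx := ne_of_gt h0
  rw [hatCurv, Finset.sum_sub_distrib, sum_right n l j x, sum_right n l k x,
    pd_hatGam n l i k j x hx, pd_hatGam n l i j k x hx, hatGam_zero, hatGam_zero]
  simp only [hatGam, zero_div, ite_self, zero_add]
  rw [sub_add_sub_comm]
  have e1 := cancel_aux (¬l = 0 ∧ (i = l ∧ k = 0 ∨ i = 0 ∧ k = l)) (l ≠ 0) (j = 0)
    (fun h => h.1) (x 0)
  have e2 := cancel_aux (¬l = 0 ∧ (i = l ∧ j = 0 ∨ i = 0 ∧ j = l)) (l ≠ 0) (k = 0)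
    (fun h => h.1) (x 0)
  linear_combination e1 - e2

lemma pd_A0s (m : ℕ) (c C : ℝ) (j : Fin m) (k : Fin (m+1)) (x : Fin (m+1) → ℝ)
    (hx : x 0 ≠ 0) :
    pd (fun y => -(c - C * y j.succ) / y 0) k x
      = (C * (if k = j.succ then (1:ℝ) else 0) * x 0
          + (c - C * x j.succ) * (if k = 0 then (1:ℝ) else 0)) / x 0 ^ 2 := by
  have hfun : (fun y : Fin (m+1) → ℝ => -(c - C * y j.succ) / y 0)
      = fun y => (-(c - C * y j.succ)) * (y 0)⁻¹ := by
    funext y; ring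
  have hd := (((hasFDerivAt_const c x).sub
      ((hasF_coord j.succ x).const_mul C)).neg).mul (hasF_inv0 x hx)
  rw [hfun, pd_of_hasFDerivAt' (f := fun y => (-(c - C * y j.succ)) * (y 0)⁻¹) hd]
  by_cases hk0 : k = 0 <;> by_cases hkj : k = j.succ
  · exfalso; rw [hk0] at hkj; exact zero_ne_succ' j hkj
  all_goals
    simp [hk0, hkj, single_app, Fin.succ_ne_zero, zero_ne_succ']
  all_goals try field_simp
  all_goals ring

set_option maxHeartbeats 2000000 in
lemma pd_Ass (m : ℕ) (c c1 c2 C : ℝ) (i j : Fin m) (k : Fin (m+1)) (x : Fin (m+1) → ℝ)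
    (hx : x 0 ≠ 0) :
    pd (fun y => (c + c1 * y j.succ + c2 * y i.succ - C * (y i.succ * y j.succ)) / y 0 ^ 2) k x
      = ((c1 - C * x i.succ) * (if k = j.succ then (1:ℝ) else 0)
          + (c2 - C * x j.succ) * (if k = i.succ then (1:ℝ) else 0)) / x 0 ^ 2
        - (if k = 0 then (1:ℝ) else 0) * 2
            * (c + c1 * x j.succ + c2 * x i.succ - C * (x i.succ * x j.succ)) / x 0 ^ 3 := by
  have hfun : (fun y : Fin (m+1) → ℝ =>
        (c + c1 * y j.succ + c2 * y i.succ - C * (y i.succ * y j.succ)) / y 0 ^ 2)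
      = fun y => (c + c1 * y j.succ + c2 * y i.succ - C * (y i.succ * y j.succ))
          * ((y 0)⁻¹ * (y 0)⁻¹) := by
    funext y; ring
  have hd := ((((hasFDerivAt_const c x).add
      ((hasF_coord j.succ x).const_mul c1)).add
      ((hasF_coord i.succ x).const_mul c2)).sub
      (((hasF_coord i.succ x).mul (hasF_coord j.succ x)).const_mul C)).mul
      ((hasF_inv0 x hx).mul (hasF_inv0 x hx))
  rw [hfun, pd_of_hasFDerivAt' (f := fun y => (c + c1 * y j.succ + c2 * y i.succ - C * (y i.succ * y j.succ))
            * ((y 0)⁻¹ * (y 0)⁻¹)) hd]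
  by_cases hk0 : k = 0 <;> by_cases hki : k = i.succ <;> by_cases hkj : k = j.succ
  · exfalso; rw [hk0] at hki; exact zero_ne_succ' i hki
  · exfalso; rw [hk0] at hki; exact zero_ne_succ' i hki
  · exfalso; rw [hk0] at hkj; exact zero_ne_succ' j hkj
  all_goals
    simp [hk0, hki, hkj, single_app, Fin.succ_ne_zero, zero_ne_succ']
  all_goals (try (split_ifs <;> try simp_all))
  all_goals try field_simp
  all_goals try ring
  all_goals tauto

lemma pd_ycoord_zero {m : ℕ} (k : Fin (m+1)) (x : Fin (m+1) → ℝ) :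
    pd (ycoord m 0) k x = if k = 0 then 1 else 0 := by
  have h : ycoord m 0 = fun y : Fin (m+1) → ℝ => y 0 := funext fun y => by simp [ycoord]
  rw [h, pd_coord]

lemma pd_ycoord_succ {m : ℕ} (i : Fin m) (k : Fin (m+1)) (x : Fin (m+1) → ℝ) :
    pd (ycoord m i.succ) k x
      = x i.succ * (if k = 0 then 1 else 0) + x 0 * (if k = i.succ then 1 else 0) := by
  have h : ycoord m i.succ = fun y : Fin (m+1) → ℝ => y 0 * y i.succ :=
    funext fun y => by simp [ycoord]
  rw [h, pd_of_hasFDerivAt' (f := fun y => y 0 * y i.succ) ((hasF_coord 0 x).mul (hasF_coord i.succ x))]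
  simp [single_app]
  try split_ifs <;> try ring

lemma pd_lin {m : ℕ} (i : Fin m) (c1 c2 : ℝ) (k : Fin (m+1)) (x : Fin (m+1) → ℝ) :
    pd (fun y => y i.succ * c1 + y 0 * c2) k x
      = (if k = i.succ then 1 else 0) * c1 + (if k = 0 then 1 else 0) * c2 := by
  rw [pd_of_hasFDerivAt' (f := fun y => y i.succ * c1 + y 0 * c2) (((hasF_coord i.succ x).mul_const c1).add
    ((hasF_coord 0 x).mul_const c2))]
  simp [single_app]
  try split_ifs <;> try ring

lemma sumE0 {m : ℕ} (F : Fin (m+1) → ℝ) :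
    (∑ nu, (if nu = 0 then (1:ℝ) else 0) * F nu) = F 0 := by
  simp [ite_mul, zero_mul, one_mul, Finset.sum_ite_eq']

lemma sumE {m : ℕ} (p : Fin (m+1)) (c d : ℝ) (F : Fin (m+1) → ℝ) :
    (∑ nu, (c * (if nu = 0 then (1:ℝ) else 0) + d * (if nu = p then (1:ℝ) else 0)) * F nu)
      = c * F 0 + d * F p := by
  have : ∀ nu, (c * (if nu = 0 then (1:ℝ) else 0) + d * (if nu = p then (1:ℝ) else 0)) * F nu
      = (if nu = 0 then c * F nu else 0) + (if nu = p then d * F nu else 0) := by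
    intro nu; split_ifs <;> simp_all <;> ring
  rw [Finset.sum_congr rfl fun nu _ => this nu, Finset.sum_add_distrib]
  simp [Finset.sum_ite_eq']

set_option maxHeartbeats 1000000 in
lemma part2 (n : ℕ) (a : Matrix (Fin n) (Fin n) ℝ) (b : Fin n → ℝ) (K : ℝ)
    (x : Fin (n + 1) → ℝ) (h0 : 0 < x 0) (al be ga : Fin (n + 1)) :
    pd (fun y => Acomp n a b K al be y) ga x
        + (∑ s, hatGam n al ga s x * Acomp n a b K s be x)
        + (∑ s, hatGam n be ga s x * Acomp n a b K al s x) = 0 := by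
  have hx := ne_of_gt h0
  rw [sum_right n al ga x, sum_right n be ga x]
  induction al using Fin.cases with
  | zero =>
    induction be using Fin.cases with
    | zero =>
      simp only [Acomp, Fin.cases_zero]
      rw [pd_const]
      simp
    | succ j =>
      simp only [Acomp, Fin.cases_zero, Fin.cases_succ]
      rw [pd_A0s n (b j) K j ga x hx]
      by_cases h1 : ga = 0 <;> by_cases h2 : ga = j.succ
      · exfalso; rw [h1] at h2; exact zero_ne_succ' j h2
      all_goals simp [h1, h2, Fin.succ_ne_zero, zero_ne_succ']
      all_goals try field_simp
      all_goals ring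
  | succ i =>
    induction be using Fin.cases with
    | zero =>
      simp only [Acomp, Fin.cases_zero, Fin.cases_succ]
      rw [pd_A0s n (b i) K i ga x hx]
      by_cases h1 : ga = 0 <;> by_cases h2 : ga = i.succ
      · exfalso; rw [h1] at h2; exact zero_ne_succ' i h2
      all_goals simp [h1, h2, Fin.succ_ne_zero, zero_ne_succ']
      all_goals try field_simp
      all_goals ring
    | succ j =>
      simp only [Acomp, Fin.cases_zero, Fin.cases_succ]
      rw [pd_Ass n (a i j) (b i) (b j) K i j ga x hx]
      by_cases h1 : ga = 0 <;> by_cases h2 : ga = i.succ <;> by_cases h3 : ga = j.succ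
      · exfalso; rw [h1] at h2; exact zero_ne_succ' i h2
      · exfalso; rw [h1] at h2; exact zero_ne_succ' i h2
      · exfalso; rw [h1] at h3; exact zero_ne_succ' j h3
      all_goals simp [h1, h2, h3, Fin.succ_ne_zero, zero_ne_succ']
      all_goals (try (split_ifs <;> try simp_all))
      all_goals try field_simp
      all_goals (first | ring | tauto)

set_option maxHeartbeats 1000000 in
lemma part3 (n : ℕ) (x : Fin (n + 1) → ℝ) (h0 : 0 < x 0) (al be ga : Fin (n + 1)) :
    pd (pd (ycoord n al) be) ga x
      - ∑ s, hatGam n s be ga x * pd (ycoord n al) s x = 0 := by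
  have hx := ne_of_gt h0
  rw [sum_left n be ga x]
  induction al using Fin.cases with
  | zero =>
    rw [show (pd (ycoord n 0) be) = (fun _ : Fin (n+1) → ℝ => (if be = 0 then (1:ℝ) else 0))
      from funext fun y => pd_ycoord_zero be y]
    rw [pd_const]
    simp [pd_ycoord_zero]
    split_ifs <;> simp_all <;> field_simp
  | succ i =>
    rw [show (pd (ycoord n i.succ) be)
        = (fun y : Fin (n+1) → ℝ => y i.succ * (if be = 0 then (1:ℝ) else 0)
            + y 0 * (if be = i.succ then (1:ℝ) else 0))
      from funext fun y => pd_ycoord_succ i be y]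
    rw [pd_lin]
    simp only [pd_ycoord_succ]
    by_cases h1 : be = 0 <;> by_cases h2 : be = i.succ <;>
      by_cases h3 : ga = 0 <;> by_cases h4 : ga = i.succ
    all_goals try (exfalso; rw [h1] at h2; exact zero_ne_succ' i h2)
    all_goals try (exfalso; rw [h3] at h4; exact zero_ne_succ' i h4)
    all_goals simp [h1, h2, h3, h4, Fin.succ_ne_zero, zero_ne_succ']
    all_goals try field_simp
    all_goals norm_num

set_option maxHeartbeats 1000000 in
lemma part4 (n : ℕ) (a : Matrix (Fin n) (Fin n) ℝ) (b : Fin n → ℝ) (K : ℝ)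
    (x : Fin (n + 1) → ℝ) (h0 : 0 < x 0) (al be : Fin (n + 1)) :
    (∑ mu, ∑ nu, pd (ycoord n al) mu x * pd (ycoord n be) nu x
        * Acomp n a b K mu nu x)
      = Aconst n a b K al be := by
  have hx := ne_of_gt h0
  induction al using Fin.cases with
  | zero =>
    induction be using Fin.cases with
    | zero =>
      simp only [pd_ycoord_zero, mul_assoc, ← Finset.mul_sum]
      simp only [sumE0]
      simp [Acomp, Aconst]
    | succ j =>
      simp only [pd_ycoord_zero, pd_ycoord_succ, mul_assoc, ← Finset.mul_sum]
      simp only [sumE0, sumE]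
      simp [Acomp, Aconst]
      field_simp
      ring
  | succ i =>
    induction be using Fin.cases with
    | zero =>
      simp only [pd_ycoord_zero, pd_ycoord_succ, mul_assoc, ← Finset.mul_sum]
      simp only [sumE0, sumE]
      simp [Acomp, Aconst]
      field_simp
      ring
    | succ j =>
      simp only [pd_ycoord_succ, mul_assoc, ← Finset.mul_sum]
      simp only [sumE0, sumE]
      simp [Acomp, Aconst]
      field_simp
      ring

end Stmt11Aux

/-- (i) `∇̂` is flat; (ii) the tensor `A` built from the data
`(a^{ij}, b^i, K)` is `∇̂`-parallel; (iii) in the coordinates `y⁰ = x⁰`,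
`y^i = x⁰x^i` the Christoffel symbols vanish (the `∇̂`-Hessians of the
`y`-coordinate functions vanish) and the components of `A`, transformed by the
Jacobi matrix of the coordinate change, are the constants
`A^{ij} = a^{ij}`, `A^{0i} = A^{i0} = −b^i`, `A^{00} = −K`. -/
theorem stmt_11 (n : ℕ) (a : Matrix (Fin n) (Fin n) ℝ) (ha : a.IsSymm)
    (b : Fin n → ℝ) (K : ℝ) :
    (∀ x : Fin (n + 1) → ℝ, 0 < x 0 →
      ∀ l i j k : Fin (n + 1), hatCurv n l i j k x = 0) ∧
    (∀ x : Fin (n + 1) → ℝ, 0 < x 0 → ∀ al be ga : Fin (n + 1),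
      pd (fun y => Acomp n a b K al be y) ga x
        + (∑ s, hatGam n al ga s x * Acomp n a b K s be x)
        + (∑ s, hatGam n be ga s x * Acomp n a b K al s x) = 0) ∧
    (∀ x : Fin (n + 1) → ℝ, 0 < x 0 → ∀ al be ga : Fin (n + 1),
      pd (pd (ycoord n al) be) ga x
        - ∑ s, hatGam n s be ga x * pd (ycoord n al) s x = 0) ∧
    (∀ x : Fin (n + 1) → ℝ, 0 < x 0 → ∀ al be : Fin (n + 1),
      (∑ mu, ∑ nu, pd (ycoord n al) mu x * pd (ycoord n be) nu x
          * Acomp n a b K mu nu x)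
        = Aconst n a b K al be) := by
  exact ⟨fun x h0 l i j k => part1 n x h0 l i j k,
    fun x h0 al be ga => part2 n a b K x h0 al be ga,
    fun x h0 al be ga => part3 n x h0 al be ga,
    fun x h0 al be => part4 n a b K x h0 al be⟩
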